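/- Fix c > 1 and r ∈ (1,2), and let b(x,w,v) = −(rc/(2−r))·x²/v^{r−1}. Then for every point (x,w,v) ∈ ℝ × (0,∞) × (0,∞) with 1 ≤ w·v^{r−1} ≤ c, the symmetric 3×3 matrix 𝔸(x,w,v) = D²b(x,w,v) + diag(2w, 0, 0) (the Hessian of b in the variables (x,w,v) plus the diagonal matrix with entries 2w, 0, 0) is negative semidefinite; equivalently, (𝔸(x,w,v)Δ, Δ) ≤ 0 for every vector Δ ∈ ℝ³. -/
import Mathlib


/-- `b(x,w,v) = -(rc/(2-r)) x²/v^{r-1}`. -/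
noncomputable def bFunR (c r : ℝ) : ℝ × ℝ × ℝ → ℝ := fun q =>
  -((r * c / (2 - r)) * q.1 ^ 2 / q.2.2 ^ (r - 1))


open Real Filter ContinuousLinearMap

section Aux

variable (K r : ℝ)

noncomputable def e1R : ℝ × ℝ × ℝ →L[ℝ] ℝ := ContinuousLinearMap.fst ℝ ℝ (ℝ × ℝ)
noncomputable def e3R : ℝ × ℝ × ℝ →L[ℝ] ℝ :=
  (ContinuousLinearMap.snd ℝ ℝ ℝ).comp (ContinuousLinearMap.snd ℝ ℝ (ℝ × ℝ))

noncomputable def gR : ℝ × ℝ × ℝ → ℝ := fun q => -K * (q.1 * q.1 * q.2.2 ^ (1 - r))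

noncomputable def a1R : ℝ × ℝ × ℝ → ℝ := fun q => -K * (2 * q.1) * q.2.2 ^ (1 - r)
noncomputable def a3R : ℝ × ℝ × ℝ → ℝ := fun q => -K * (q.1 * q.1) * ((1 - r) * q.2.2 ^ (-r))

noncomputable def FbR : ℝ × ℝ × ℝ → (ℝ × ℝ × ℝ →L[ℝ] ℝ) := fun q =>
  a1R K r q • e1R + a3R K r q • e3R

lemma h3R (q : ℝ × ℝ × ℝ) : HasFDerivAt (fun p : ℝ × ℝ × ℝ => p.2.2) e3R q :=
  (hasFDerivAt_snd).comp q hasFDerivAt_snd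

lemma hgR (q : ℝ × ℝ × ℝ) (hq : 0 < q.2.2) : HasFDerivAt (gR K r) (FbR K r q) q := by
  have h1 : HasFDerivAt (fun p : ℝ × ℝ × ℝ => p.1) e1R q := hasFDerivAt_fst
  have hp : HasFDerivAt (fun p : ℝ × ℝ × ℝ => p.2.2 ^ (1 - r))
      (((1 - r) * q.2.2 ^ (-r)) • e3R) q := by
    have := (h3R q).rpow_const (p := 1 - r) (Or.inl hq.ne')
    rwa [show (1:ℝ) - r - 1 = -r by ring] at this
  have hx2 := h1.mul h1
  have H := (hx2.mul hp).const_mul (-K)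
  have : HasFDerivAt (gR K r)
      ((-K) • ((q.1 * q.1) • (((1 - r) * q.2.2 ^ (-r)) • e3R) +
        q.2.2 ^ (1 - r) • (q.1 • e1R + q.1 • e1R))) q := H
  refine this.congr_fderiv ?_
  ext <;> simp [FbR, a1R, a3R, e1R, e3R] <;> ring

end Aux

lemma hFbR (K r x w v : ℝ) (hv : 0 < v) (Δ : ℝ × ℝ × ℝ) :
    (fderiv ℝ (FbR K r) (x, w, v)) Δ Δ =
      -2*K*v^(1-r)*Δ.1^2 - 4*K*(1-r)*x*v^(-r)*Δ.1*Δ.2.2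
        + K*r*(1-r)*x*x*v^(-r-1)*Δ.2.2^2 := by
  set z : ℝ × ℝ × ℝ := (x, w, v) with hz
  have hzv : (0:ℝ) < z.2.2 := hv
  have h1 : HasFDerivAt (fun p : ℝ × ℝ × ℝ => p.1) e1R z := hasFDerivAt_fst
  have hp : HasFDerivAt (fun p : ℝ × ℝ × ℝ => p.2.2 ^ (1 - r))
      (((1 - r) * z.2.2 ^ (-r)) • e3R) z := by
    have := (h3R z).rpow_const (p := 1 - r) (Or.inl hzv.ne')
    rwa [show (1:ℝ) - r - 1 = -r by ring] at this
  have hq : HasFDerivAt (fun p : ℝ × ℝ × ℝ => p.2.2 ^ (-r))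
      ((-r * z.2.2 ^ (-r - 1)) • e3R) z := by
    have := (h3R z).rpow_const (p := -r) (Or.inl hzv.ne')
    rwa [show -r - 1 = -r - 1 by ring] at this
  have ha1 : HasFDerivAt (a1R K r)
      ((-K * (2 * z.1)) • (((1 - r) * z.2.2 ^ (-r)) • e3R)
        + (z.2.2 ^ (1 - r)) • ((-K) • ((2:ℝ) • e1R))) z :=
    ((h1.const_mul 2).const_mul (-K)).mul hp
  have ha3 : HasFDerivAt (a3R K r)
      ((-K * (z.1 * z.1)) • ((1 - r) • ((-r * z.2.2 ^ (-r - 1)) • e3R))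
        + ((1 - r) * z.2.2 ^ (-r)) • ((-K) • (z.1 • e1R + z.1 • e1R))) z :=
    ((h1.mul h1).const_mul (-K)).mul (hq.const_mul (1 - r))
  have hD : HasFDerivAt (FbR K r) _ z := (ha1.smul_const e1R).add (ha3.smul_const e3R)
  rw [hD.fderiv]
  simp [e1R, e3R, hz]
  ring

/-- On the region `1 ≤ w v^{r-1} ≤ c`, the matrix `𝔸(x,w,v) = D²b(x,w,v) + diag(2w, 0, 0)` is
negative semidefinite: its quadratic form is nonpositive on every vector `Δ ∈ ℝ³`. -/
theorem bFunR_matrix_nonpositive (c r : ℝ) (hc : 1 < c) (hr1 : 1 < r) (hr2 : r < 2)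
    (x w v : ℝ) (hw : 0 < w) (hv : 0 < v)
    (h1 : 1 ≤ w * v ^ (r - 1)) (h2 : w * v ^ (r - 1) ≤ c)
    (Δ : ℝ × ℝ × ℝ) :
    (iteratedFDeriv ℝ 2 (bFunR c r) (x, w, v)) ![Δ, Δ] + 2 * w * Δ.1 ^ 2 ≤ 0 := by
  set K : ℝ := r * c / (2 - r) with hK
  set z : ℝ × ℝ × ℝ := (x, w, v) with hz
  have h2r : (0:ℝ) < 2 - r := by linarith
  have hopen : IsOpen {q : ℝ × ℝ × ℝ | 0 < q.2.2} :=
    isOpen_lt continuous_const (continuous_snd.comp continuous_snd)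
  have hmem : {q : ℝ × ℝ × ℝ | 0 < q.2.2} ∈ nhds z := hopen.mem_nhds hv
  have hEq : bFunR c r =ᶠ[nhds z] gR K r := by
    filter_upwards [hmem] with q hq
    have hne : q.2.2 ^ (r - 1) ≠ 0 := (Real.rpow_pos_of_pos hq (r - 1)).ne'
    have hinv : q.2.2 ^ (1 - r) = (q.2.2 ^ (r - 1))⁻¹ := by
      rw [show (1:ℝ) - r = -(r - 1) by ring, Real.rpow_neg hq.le]
    simp only [bFunR, gR, hinv, ← hK]
    rw [div_eq_mul_inv, pow_two]
    ring
  have hgF : fderiv ℝ (gR K r) =ᶠ[nhds z] FbR K r := by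
    filter_upwards [hmem] with q hq
    exact (hgR K r q hq).fderiv
  have key : (iteratedFDeriv ℝ 2 (bFunR c r) z) ![Δ, Δ]
      = (fderiv ℝ (FbR K r) z) Δ Δ := by
    rw [iteratedFDeriv_two_apply]
    simp only [Matrix.cons_val_zero, Matrix.cons_val_one, Matrix.head_cons]
    rw [hEq.fderiv.fderiv_eq, hgF.fderiv_eq]
  rw [key, hFbR K r x w v hv Δ]
  -- algebra
  set u := Δ.1
  set s := Δ.2.2
  set A := v ^ (1 - r) with hA
  set B := v ^ (-r) with hB
  set C := v ^ (-r - 1) with hC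
  have hApos : 0 < A := Real.rpow_pos_of_pos hv _
  have hCpos : 0 < C := Real.rpow_pos_of_pos hv _
  have hBC : B = C * v := by
    rw [hB, hC, ← Real.rpow_add_one hv.ne']; congr 1; ring
  have hAC : A = C * v ^ (2:ℕ) := by
    rw [hA, hC]
    rw [show (1:ℝ) - r = -r - 1 + 1 + 1 by ring, Real.rpow_add_one hv.ne',
      Real.rpow_add_one hv.ne']
    ring
  have hwA : w ≤ c * A := by
    have hone : v ^ (r - 1) * A = 1 := by
      rw [hA, ← Real.rpow_add hv]; norm_num
    calc w = w * v ^ (r - 1) * A := by rw [mul_assoc, hone, mul_one]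
      _ ≤ c * A := mul_le_mul_of_nonneg_right h2 hApos.le
  have hident : -2*K*A*u^2 - 4*K*(1-r)*x*B*u*s + K*r*(1-r)*x*x*C*s^2 + 2*(c*A)*u^2
      = -(C*(r-1)*c/(2-r) * (2*v*u - r*x*s)^2) := by
    rw [hAC, hBC, hK]
    field_simp
    ring
  have hrhs : -(C*(r-1)*c/(2-r) * (2*v*u - r*x*s)^2) ≤ 0 := by
    apply neg_nonpos_of_nonneg
    apply mul_nonneg _ (sq_nonneg _)
    apply div_nonneg _ h2r.le
    have : (0:ℝ) ≤ r - 1 := by linarith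
    have hc0 : (0:ℝ) ≤ c := by linarith
    positivity
  have hmul : 0 ≤ (c * A - w) * u ^ 2 :=
    mul_nonneg (by linarith) (sq_nonneg u)
  nlinarith [hident, hrhs, hmul]
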